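/- Theorem 2 (core property and 2Δ price-of-fair-sharing of the cross-monotone mechanism, stated via its certificates): suppose c_i ≥ 0 for all i ∈ F and for each user j ∈ U there are a set X_j ⊆ F feasible for {j} and nonnegative reals (y'^S_j)_{S⊆F} such that (i) y'_j is individually dual feasible for j (Σ_{S⊆F, i∉S} a_{ij}^S y'^S_j ≤ c_i for all i ∈ F) and (ii) Σ_{i∈X_j} c_i ≤ 2 Σ_{S⊆F} r_j^S y'^S_j. Let Δ = max_{i∈F} |{j ∈ U : a_{ij} > 0}| with Δ ≥ 1, let X = ∪_{j∈U} X_j, and define cost shares ξ_j = (1/Δ) Σ_{S⊆F} r_j^S y'^S_j. Then X is feasible for U, the cost shares satisfy the core property (for every J ⊆ U and every X' ⊆ F feasible for J, Σ_{j∈J} ξ_j ≤ Σ_{i∈X'} c_i), and Σ_{j∈U} ξ_j ≥ (1/(2Δ)) · Σ_{i∈X} c_i. -/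

import Mathlib

open Finset

/-- Residual requirement of user `j` given the set `S` of built facilities. -/
noncomputable def resReq {F U : Type*} [DecidableEq F]
    (a : F → U → ℝ) (r : U → ℝ) (S : Finset F) (j : U) : ℝ :=
  max (r j - ∑ i ∈ S, a i j) 0

/-- Residual contribution of facility `i` to user `j` given built facilities `S`. -/
noncomputable def resCon {F U : Type*} [DecidableEq F]
    (a : F → U → ℝ) (r : U → ℝ) (S : Finset F) (i : F) (j : U) : ℝ :=
  if i ∈ S then 0 else min (a i j) (resReq a r S j)

/-!
Feasibility and cost recovery are bookkeeping: `X` contains every `X j`, and the cost of a union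
is at most the sum of the costs. For the core property, fix `J` and a solution `X'` feasible for
`J`. Whatever the built set `S`, the residual contributions of `X'` still cover the residual
requirement of each `j ∈ J`, so the dual value of `y' j` is at most the sum over `i ∈ X'` of the
load `y' j` puts on `i`. Individual dual feasibility bounds each load by `c i`, and a load
vanishes unless `a i j > 0`, which happens for at most `Δ` users; hence the dual values of the
users of `J` add up to at most `Δ` times the cost of `X'`.
-/

theorem Finset.le_sum_min_of_le_sum {ι M : Type*} [AddCommMonoid M] [LinearOrder M]
    [IsOrderedAddMonoid M] {s : Finset ι} {f : ι → M} {t : M}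
    (hf : ∀ i ∈ s, 0 ≤ f i) (ht : 0 ≤ t) (h : t ≤ ∑ i ∈ s, f i) :
    t ≤ ∑ i ∈ s, min (f i) t := by
  by_cases hlt : ∀ i ∈ s, f i < t
  · rwa [sum_congr rfl fun i hi => min_eq_left (hlt i hi).le]
  · obtain ⟨i, hi, hti⟩ : ∃ i ∈ s, t ≤ f i := by simpa using hlt
    calc t = min (f i) t := (min_eq_right hti).symm
      _ ≤ ∑ i ∈ s, min (f i) t := single_le_sum (fun k hk => le_min (hf k hk) ht) hi

theorem Finset.sum_biUnion_le_sum_sum {ι κ M : Type*} [DecidableEq κ] [AddCommMonoid M]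
    [PartialOrder M] [IsOrderedAddMonoid M] {f : κ → M} (hf : ∀ x, 0 ≤ f x)
    (s : Finset ι) (t : ι → Finset κ) :
    ∑ x ∈ s.biUnion t, f x ≤ ∑ i ∈ s, ∑ x ∈ t i, f x := by
  rw [← sup_eq_biUnion]
  refine apply_sup_le_sum (f := fun T => ∑ x ∈ T, f x) sum_empty (fun {A B} => ?_) s
  calc ∑ x ∈ A ⊔ B, f x ≤ ∑ x ∈ A ∪ B, f x + ∑ x ∈ A ∩ B, f x :=
        le_add_of_nonneg_right (sum_nonneg fun x _ => hf x)
    _ = ∑ x ∈ A, f x + ∑ x ∈ B, f x := sum_union_inter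

theorem Finset.sum_le_mul_of_card_filter_le {ι R : Type*} [Semiring R] [PartialOrder R]
    [IsOrderedRing R] {s : Finset ι} {f : ι → R} {b : R} {p : ι → Prop} [DecidablePred p]
    {n : ℕ} (hb : 0 ≤ b) (hf : ∀ i ∈ s, f i ≤ b) (hp : ∀ i ∈ s, f i ≠ 0 → p i)
    (hn : #{i ∈ s | p i} ≤ n) :
    ∑ i ∈ s, f i ≤ n * b := by
  rw [← sum_filter_of_ne hp]
  calc ∑ i ∈ s with p i, f i ≤ #{i ∈ s | p i} • b :=
        sum_le_card_nsmul _ _ _ fun i hi => hf i (mem_filter.1 hi).1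
    _ ≤ n * b := by rw [nsmul_eq_mul]; gcongr

section Residual

variable {F U : Type*} [DecidableEq F] (a : F → U → ℝ) (r : U → ℝ)

theorem resReq_nonneg (S : Finset F) (j : U) : 0 ≤ resReq a r S j :=
  le_max_right _ _

variable {a r}

theorem resCon_of_mem {S : Finset F} {i : F} (h : i ∈ S) (j : U) : resCon a r S i j = 0 :=
  if_pos h

theorem resCon_of_eq_zero {i : F} {j : U} (h : a i j = 0) (S : Finset F) :
    resCon a r S i j = 0 := by
  unfold resCon
  split_ifs
  · rfl
  · rw [h]; exact min_eq_left (resReq_nonneg a r S j)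

theorem resReq_le_sum_resCon (ha : ∀ i j, 0 ≤ a i j) {X' : Finset F} {j : U}
    (hfeas : r j ≤ ∑ i ∈ X', a i j) (S : Finset F) :
    resReq a r S j ≤ ∑ i ∈ X', resCon a r S i j := by
  have hcon : ∑ i ∈ X', resCon a r S i j =
      ∑ i ∈ X' with i ∉ S, min (a i j) (resReq a r S j) := by
    simp only [sum_filter, resCon, ite_not]
  have hrest : r j - ∑ i ∈ S, a i j ≤ ∑ i ∈ X' with i ∉ S, a i j := by
    have hin : ∑ i ∈ X' with i ∈ S, a i j ≤ ∑ i ∈ S, a i j :=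
      sum_le_sum_of_subset_of_nonneg (fun i hi => (mem_filter.1 hi).2) fun i _ _ => ha i j
    linarith [sum_filter_add_sum_filter_not X' (· ∈ S) (a · j)]
  rw [hcon]
  exact le_sum_min_of_le_sum (fun i _ => ha i j) (resReq_nonneg a r S j)
    (max_le hrest (sum_nonneg fun i _ => ha i j))

end Residual

section Dual

variable {F U : Type*} [Fintype F] [DecidableEq F] (a : F → U → ℝ) (r : U → ℝ)

/-- The left-hand side of the individual dual feasibility constraint of facility `i`. -/
noncomputable def dualLoad (y : Finset F → ℝ) (i : F) (j : U) : ℝ :=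
  ∑ S ∈ univ.filter (fun S : Finset F => i ∉ S), resCon a r S i j * y S

noncomputable def dualValue (y : Finset F → ℝ) (j : U) : ℝ :=
  ∑ S : Finset F, resReq a r S j * y S

variable {a r}

theorem dualLoad_eq_sum (y : Finset F → ℝ) (i : F) (j : U) :
    dualLoad a r y i j = ∑ S : Finset F, resCon a r S i j * y S :=
  sum_filter_of_ne fun S _ hS hiS => hS (by rw [resCon_of_mem hiS, zero_mul])

theorem dualLoad_of_eq_zero {i : F} {j : U} (h : a i j = 0) (y : Finset F → ℝ) :
    dualLoad a r y i j = 0 :=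
  sum_eq_zero fun S _ => by rw [resCon_of_eq_zero h, zero_mul]

theorem dualValue_le_sum_dualLoad (ha : ∀ i j, 0 ≤ a i j) {y : Finset F → ℝ}
    (hy : ∀ S, 0 ≤ y S) {X' : Finset F} {j : U} (hfeas : r j ≤ ∑ i ∈ X', a i j) :
    dualValue a r y j ≤ ∑ i ∈ X', dualLoad a r y i j := by
  simp only [dualValue, dualLoad_eq_sum]
  rw [sum_comm]
  refine sum_le_sum fun S _ => ?_
  rw [← sum_mul]
  exact mul_le_mul_of_nonneg_right (resReq_le_sum_resCon ha hfeas S) (hy S)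

theorem sum_dualValue_le_mul_sum_cost [Fintype U] (ha : ∀ i j, 0 ≤ a i j) {c : F → ℝ}
    (hc : ∀ i, 0 ≤ c i) {y : U → Finset F → ℝ} (hy : ∀ j S, 0 ≤ y j S)
    (hindiv : ∀ j i, dualLoad a r (y j) i j ≤ c i) {Δ : ℕ}
    (hΔ : ∀ i, #{j | 0 < a i j} ≤ Δ) {J : Finset U} {X' : Finset F}
    (hfeas : ∀ j ∈ J, r j ≤ ∑ i ∈ X', a i j) :
    ∑ j ∈ J, dualValue a r (y j) j ≤ Δ * ∑ i ∈ X', c i := by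
  have hload : ∀ i, ∑ j ∈ J, dualLoad a r (y j) i j ≤ Δ * c i := fun i =>
    sum_le_mul_of_card_filter_le (hc i) (fun j _ => hindiv j i)
      (fun j _ hj => (ha i j).lt_of_ne fun h => hj (dualLoad_of_eq_zero h.symm _))
      ((card_le_card (filter_subset_filter _ (subset_univ J))).trans (hΔ i))
  calc ∑ j ∈ J, dualValue a r (y j) j ≤ ∑ j ∈ J, ∑ i ∈ X', dualLoad a r (y j) i j :=
        sum_le_sum fun j hj => dualValue_le_sum_dualLoad ha (hy j) (hfeas j hj)
    _ = ∑ i ∈ X', ∑ j ∈ J, dualLoad a r (y j) i j := sum_comm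
    _ ≤ Δ * ∑ i ∈ X', c i := by
        rw [mul_sum]; exact sum_le_sum fun i _ => hload i

end Dual

theorem cross_monotone_mechanism_general
    {F U : Type*} [Fintype F] [DecidableEq F] [Fintype U]
    (a : F → U → ℝ) (r : U → ℝ) (c : F → ℝ)
    (ha : ∀ i j, 0 ≤ a i j) (hc : ∀ i, 0 ≤ c i)
    (Xj : U → Finset F) (hXj : ∀ j : U, r j ≤ ∑ i ∈ Xj j, a i j)
    (y' : U → Finset F → ℝ) (hy' : ∀ j S, 0 ≤ y' j S)
    (hindiv : ∀ (j : U) (i : F),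
      ∑ S ∈ Finset.univ.filter (fun S : Finset F => i ∉ S),
        resCon a r S i j * y' j S ≤ c i)
    (happrox : ∀ j : U, ∑ i ∈ Xj j, c i ≤ 2 * ∑ S : Finset F, resReq a r S j * y' j S)
    (Δ : ℕ)
    (hΔ : Δ = Finset.univ.sup
      (fun i : F => (Finset.univ.filter (fun j : U => 0 < a i j)).card))
    (X : Finset F) (hX : X = Finset.univ.biUnion Xj)
    (ξ : U → ℝ)
    (hξ : ∀ j, ξ j = (1 / (Δ : ℝ)) * ∑ S : Finset F, resReq a r S j * y' j S) :
    -- X is feasible for the full user set U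
    (∀ j : U, r j ≤ ∑ i ∈ X, a i j) ∧
    -- the cost shares satisfy the core property
    (∀ (J : Finset U) (X' : Finset F),
      (∀ j ∈ J, r j ≤ ∑ i ∈ X', a i j) →
      ∑ j ∈ J, ξ j ≤ ∑ i ∈ X', c i) ∧
    -- the cost shares recover at least a 1/(2Δ) fraction of the cost
    (1 / (2 * (Δ : ℝ))) * ∑ i ∈ X, c i ≤ ∑ j : U, ξ j := by
  have hcard : ∀ i, #{j | 0 < a i j} ≤ Δ := fun i =>
    hΔ ▸ le_sup (f := fun i : F => #{j | 0 < a i j}) (mem_univ i)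
  have hshares : ∀ J, ∑ j ∈ J, ξ j = (∑ j ∈ J, dualValue a r (y' j) j) / Δ := by
    intro J
    simp only [hξ, dualValue, one_div_mul_eq_div, sum_div]
  subst hX
  refine ⟨fun j => ?_, fun J X' hfeas => ?_, ?_⟩
  · exact (hXj j).trans <| sum_le_sum_of_subset_of_nonneg
      (subset_biUnion_of_mem Xj (mem_univ j)) fun i _ _ => ha i j
  · rw [hshares]
    refine div_le_of_le_mul₀ Δ.cast_nonneg (sum_nonneg fun i _ => hc i) ?_
    rw [mul_comm]
    exact sum_dualValue_le_mul_sum_cost ha hc hy' hindiv hcard hfeas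
  · have hcost : ∑ i ∈ univ.biUnion Xj, c i ≤ 2 * ∑ j, dualValue a r (y' j) j :=
      (sum_biUnion_le_sum_sum hc _ _).trans <| by
        rw [mul_sum]; exact sum_le_sum fun j _ => happrox j
    calc 1 / (2 * (Δ : ℝ)) * ∑ i ∈ univ.biUnion Xj, c i
        ≤ 1 / (2 * (Δ : ℝ)) * (2 * ∑ j, dualValue a r (y' j) j) := by gcongr
      _ = ∑ j, ξ j := by rw [hshares]; ring

/-- Theorem 2: the cross-monotone mechanism, stated via its certificates,
produces a feasible solution for the full user set, cost shares satisfying the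
core property, and a cost-recovery ratio of `1/(2Δ)`. -/
theorem cross_monotone_mechanism
    {F U : Type*} [Fintype F] [DecidableEq F] [Fintype U]
    (a : F → U → ℝ) (r : U → ℝ) (c : F → ℝ)
    (ha : ∀ i j, 0 ≤ a i j) (hc : ∀ i, 0 ≤ c i)
    (Xj : U → Finset F) (hXj : ∀ j : U, r j ≤ ∑ i ∈ Xj j, a i j)
    (y' : U → Finset F → ℝ) (hy' : ∀ j S, 0 ≤ y' j S)
    (hindiv : ∀ (j : U) (i : F),
      ∑ S ∈ Finset.univ.filter (fun S : Finset F => i ∉ S),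
        resCon a r S i j * y' j S ≤ c i)
    (happrox : ∀ j : U, ∑ i ∈ Xj j, c i ≤ 2 * ∑ S : Finset F, resReq a r S j * y' j S)
    (Δ : ℕ)
    (hΔ : Δ = Finset.univ.sup
      (fun i : F => (Finset.univ.filter (fun j : U => 0 < a i j)).card))
    (hΔpos : 1 ≤ Δ)
    (X : Finset F) (hX : X = Finset.univ.biUnion Xj)
    (ξ : U → ℝ)
    (hξ : ∀ j, ξ j = (1 / (Δ : ℝ)) * ∑ S : Finset F, resReq a r S j * y' j S) :
    -- X is feasible for the full user set U
    (∀ j : U, r j ≤ ∑ i ∈ X, a i j) ∧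
    -- the cost shares satisfy the core property
    (∀ (J : Finset U) (X' : Finset F),
      (∀ j ∈ J, r j ≤ ∑ i ∈ X', a i j) →
      ∑ j ∈ J, ξ j ≤ ∑ i ∈ X', c i) ∧
    -- the cost shares recover at least a 1/(2Δ) fraction of the cost
    (1 / (2 * (Δ : ℝ))) * ∑ i ∈ X, c i ≤ ∑ j : U, ξ j :=
  cross_monotone_mechanism_general a r c ha hc Xj hXj y' hy' hindiv happrox Δ hΔ X hX ξ hξ
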